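/- arXiv:2211.15730 — 2 statements merged into one kernel-verified Lean document; each statement's English description precedes it below -/
import Mathlib

section
/- Let $A$ be a $q \times p$ real matrix of full row rank with $p > q$, $\Sigma_y$ a $q \times q$ symmetric positive-definite matrix, and $\Sigma_\theta$ a $p \times p$ symmetric positive-definite matrix. Define $\tilde\Sigma := \big(A^\top \Sigma_y^{-1} A - A^\top (A \Sigma_\theta A^\top)^{-1} A + \Sigma_\theta^{-1}\big)^{-1}$. Then $A \tilde\Sigma A^\top = \Sigma_y$. -/
/-!
Write `B = A Σ_θ Aᵀ`, invertible because `A` has full row rank. The precision matrix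
`Aᵀ Σ_y⁻¹ A - Aᵀ B⁻¹ A + Σ_θ⁻¹` has the explicit inverse
`Σ_θ + Σ_θ Aᵀ B⁻¹ (Σ_y - B) B⁻¹ A Σ_θ`, as a direct multiplication shows, and sandwiching this
inverse between `A` and `Aᵀ` gives `B + (Σ_y - B) = Σ_y`.
-/

open Matrix

namespace Matrix

variable {m n R : Type*} [Fintype m] [Fintype n]

theorem vecMul_injective_of_rank_eq_card [Field R] {A : Matrix m n R}
    (hA : A.rank = Fintype.card m) : Function.Injective A.vecMul := by
  rw [vecMul_injective_iff, linearIndependent_iff_card_eq_finrank_span, ← hA,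
    rank_eq_finrank_span_row, Set.finrank]

theorem PosDef.mul_mul_transpose_of_rank_eq_card {S : Matrix n n ℝ} (hS : S.PosDef)
    {A : Matrix m n ℝ} (hA : A.rank = Fintype.card m) : (A * S * Aᵀ).PosDef := by
  simpa using hS.mul_mul_conjTranspose_same (vecMul_injective_of_rank_eq_card hA)

variable [DecidableEq m] [CommRing R]

noncomputable def bjwPrecision [DecidableEq n] (A : Matrix m n R) (S : Matrix n n R)
    (T : Matrix m m R) : Matrix n n R :=
  Aᵀ * T⁻¹ * A - Aᵀ * (A * S * Aᵀ)⁻¹ * A + S⁻¹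

/-- The covariance `S` with its `A`-marginal `A S Aᵀ` corrected to `T`. -/
noncomputable def bjwCovariance (A : Matrix m n R) (S : Matrix n n R) (T : Matrix m m R) :
    Matrix n n R :=
  S + S * Aᵀ * (A * S * Aᵀ)⁻¹ * (T - A * S * Aᵀ) * (A * S * Aᵀ)⁻¹ * A * S

variable {A : Matrix m n R} {S : Matrix n n R} {T : Matrix m m R}

theorem mul_bjwCovariance (hB : IsUnit (A * S * Aᵀ).det) :
    A * bjwCovariance A S T = T * ((A * S * Aᵀ)⁻¹ * (A * S)) := by
  rw [bjwCovariance]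
  set B := A * S * Aᵀ with hB_def
  have hAB : ∀ Z : Matrix m n R, A * (S * (Aᵀ * Z)) = B * Z := fun Z => by
    simp only [hB_def, Matrix.mul_assoc]
  simp only [Matrix.mul_add, Matrix.mul_assoc, hAB, mul_nonsing_inv_cancel_left _ _ hB,
    Matrix.sub_mul]
  abel

theorem mul_bjwCovariance_mul_transpose (hB : IsUnit (A * S * Aᵀ).det) :
    A * bjwCovariance A S T * Aᵀ = T := by
  rw [mul_bjwCovariance hB, Matrix.mul_assoc, Matrix.mul_assoc, nonsing_inv_mul _ hB,
    Matrix.mul_one]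

theorem bjwPrecision_mul_bjwCovariance [DecidableEq n] (hS : IsUnit S.det) (hT : IsUnit T.det)
    (hB : IsUnit (A * S * Aᵀ).det) : bjwPrecision A S T * bjwCovariance A S T = 1 := by
  rw [bjwPrecision, Matrix.add_mul, Matrix.sub_mul, Matrix.mul_assoc _ A, Matrix.mul_assoc _ A,
    mul_bjwCovariance hB, bjwCovariance]
  set B := A * S * Aᵀ
  simp only [Matrix.mul_add, Matrix.mul_assoc, nonsing_inv_mul_cancel_left _ _ hS,
    nonsing_inv_mul_cancel_left _ _ hT, nonsing_inv_mul_cancel_left _ _ hB,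
    nonsing_inv_mul _ hS, Matrix.sub_mul, Matrix.mul_sub]
  abel

theorem inv_bjwPrecision [DecidableEq n] (hS : IsUnit S.det) (hT : IsUnit T.det)
    (hB : IsUnit (A * S * Aᵀ).det) : (bjwPrecision A S T)⁻¹ = bjwCovariance A S T :=
  inv_eq_right_inv (bjwPrecision_mul_bjwCovariance hS hT hB)

end Matrix

theorem stmt6_general
    (p q : ℕ)
    (A : Matrix (Fin q) (Fin p) ℝ) (hA : A.rank = q)
    (Sy : Matrix (Fin q) (Fin q) ℝ) (hSy : Sy.PosDef)
    (St : Matrix (Fin p) (Fin p) ℝ) (hSt : St.PosDef)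
    (tS : Matrix (Fin p) (Fin p) ℝ)
    (htS : tS = (Aᵀ * Sy⁻¹ * A - Aᵀ * (A * St * Aᵀ)⁻¹ * A + St⁻¹)⁻¹) :
    A * tS * Aᵀ = Sy := by
  have hB : (A * St * Aᵀ).PosDef :=
    hSt.mul_mul_transpose_of_rank_eq_card (by rwa [Fintype.card_fin])
  have htS_cov : tS = bjwCovariance A St Sy :=
    htS.trans (inv_bjwPrecision hSt.det_pos.ne'.isUnit hSy.det_pos.ne'.isUnit
      hB.det_pos.ne'.isUnit)
  rw [htS_cov, mul_bjwCovariance_mul_transpose hB.det_pos.ne'.isUnit]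

/-- covariance part of Lemma B.1: for a full row rank `q × p` matrix `A`
(`p > q`) and positive-definite `Σ_y`, `Σ_θ`, the BJW covariance
`Σ̃ = (Aᵀ Σ_y⁻¹ A - Aᵀ (A Σ_θ Aᵀ)⁻¹ A + Σ_θ⁻¹)⁻¹` satisfies `A Σ̃ Aᵀ = Σ_y`. -/
theorem stmt6
    (p q : ℕ) (hpq : q < p)
    (A : Matrix (Fin q) (Fin p) ℝ) (hA : A.rank = q)
    (Sy : Matrix (Fin q) (Fin q) ℝ) (hSy : Sy.PosDef) (hSy_symm : Sy.IsSymm)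
    (St : Matrix (Fin p) (Fin p) ℝ) (hSt : St.PosDef) (hSt_symm : St.IsSymm)
    (tS : Matrix (Fin p) (Fin p) ℝ)
    (htS : tS = (Aᵀ * Sy⁻¹ * A - Aᵀ * (A * St * Aᵀ)⁻¹ * A + St⁻¹)⁻¹)
    (htS_inv : IsUnit (Aᵀ * Sy⁻¹ * A - Aᵀ * (A * St * Aᵀ)⁻¹ * A + St⁻¹).det) :
    A * tS * Aᵀ = Sy :=
  stmt6_general p q A hA Sy hSy St hSt tS htS
end

section
/- Suppose $p \times p$ invertible matrix $A$, target Gaussian $Y \sim N_p(\mu_y, \Sigma_y)$, and initial Gaussian $\underline\Theta \sim N_p(\mu_\theta, \Sigma_\theta)$ with all covariances positive definite. Then the BJW density $f^{BJW}(\theta) \propto \underline f_\Theta(\theta)\, f_Y(A\theta)\,/\,\underline f_\Gamma(A\theta)$, where $\underline f_\Gamma$ is the density of $A\underline\Theta$, equals the Gaussian density $N_p(A^{-1}\mu_y,\; A^{-1}\Sigma_y A^{-\top})$; in particular it is independent of the choice of initial density $(\mu_\theta, \Sigma_\theta)$. -/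
open MeasureTheory Matrix Real

/-- The multivariate Gaussian density `N_p(μ, Σ)` on `ℝᵖ` (as `Fin p → ℝ`). -/
noncomputable def mvGaussianPdf {p : ℕ} (μ : Fin p → ℝ) (S : Matrix (Fin p) (Fin p) ℝ)
    (x : Fin p → ℝ) : ℝ :=
  (Real.sqrt ((2 * π) ^ p * S.det))⁻¹ *
    Real.exp (-(dotProduct (x - μ) (S⁻¹.mulVec (x - μ))) / 2)

lemma quad_conj {p : ℕ} (A M : Matrix (Fin p) (Fin p) ℝ) (v : Fin p → ℝ) :
    dotProduct (A.mulVec v) (M.mulVec (A.mulVec v)) = dotProduct v ((Aᵀ * M * A).mulVec v) := by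
  conv_rhs => rw [← Matrix.mulVec_mulVec, Matrix.dotProduct_mulVec, ← Matrix.vecMul_vecMul,
    Matrix.vecMul_transpose]
  rw [Matrix.dotProduct_mulVec]

/-- for a square invertible `A`, Gaussian target `N_p(μ_y, Σ_y)` and Gaussian
initial density `N_p(μ_θ, Σ_θ)` (whose pushforward under `θ ↦ Aθ` is
`N_p(Aμ_θ, AΣ_θAᵀ)`), the BJW density
`f_Θ(θ) f_Y(Aθ) / f_Γ(Aθ)` equals the density of `N_p(A⁻¹μ_y, A⁻¹Σ_y A⁻ᵀ)` pointwise;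
in particular it does not depend on `(μ_θ, Σ_θ)`. -/
theorem stmt10
    (p : ℕ)
    (A : Matrix (Fin p) (Fin p) ℝ) (hA : IsUnit A.det)
    (muY muT : Fin p → ℝ)
    (Sy St : Matrix (Fin p) (Fin p) ℝ)
    (hSy : Sy.PosDef) (hSy_symm : Sy.IsSymm)
    (hSt : St.PosDef) (hSt_symm : St.IsSymm) :
    ∀ θ : Fin p → ℝ,
      mvGaussianPdf muT St θ * mvGaussianPdf muY Sy (A.mulVec θ)
          / mvGaussianPdf (A.mulVec muT) (A * St * Aᵀ) (A.mulVec θ)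
        = mvGaussianPdf (A⁻¹.mulVec muY) (A⁻¹ * Sy * A⁻¹ᵀ) θ := by
  intro θ
  have hd : A.det ≠ 0 := hA.ne_zero
  have hAT : IsUnit Aᵀ.det := by rwa [Matrix.det_transpose]
  have hAinvA : A⁻¹ * A = 1 := Matrix.nonsing_inv_mul A hA
  have hAAinv : A * A⁻¹ = 1 := Matrix.mul_nonsing_inv A hA
  have hTinv : Aᵀ * Aᵀ⁻¹ = 1 := Matrix.mul_nonsing_inv Aᵀ hAT
  -- matrix identities
  have hM1 : Aᵀ * (A * St * Aᵀ)⁻¹ * A = St⁻¹ := by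
    rw [Matrix.mul_inv_rev, Matrix.mul_inv_rev]
    calc Aᵀ * (Aᵀ⁻¹ * (St⁻¹ * A⁻¹)) * A
        = (Aᵀ * Aᵀ⁻¹) * St⁻¹ * (A⁻¹ * A) := by noncomm_ring
      _ = St⁻¹ := by rw [hTinv, hAinvA, one_mul, mul_one]
  have hM2 : (A⁻¹ * Sy * A⁻¹ᵀ)⁻¹ = Aᵀ * Sy⁻¹ * A := by
    rw [Matrix.mul_inv_rev, Matrix.mul_inv_rev, Matrix.transpose_nonsing_inv,
      Matrix.nonsing_inv_nonsing_inv A hA, Matrix.nonsing_inv_nonsing_inv Aᵀ hAT, mul_assoc]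
  -- quadratic forms
  have hq1 : dotProduct (A.mulVec θ - A.mulVec muT)
      ((A * St * Aᵀ)⁻¹.mulVec (A.mulVec θ - A.mulVec muT))
      = dotProduct (θ - muT) (St⁻¹.mulVec (θ - muT)) := by
    rw [← Matrix.mulVec_sub, quad_conj, hM1]
  have hAv : A.mulVec (θ - A⁻¹.mulVec muY) = A.mulVec θ - muY := by
    rw [Matrix.mulVec_sub, Matrix.mulVec_mulVec, hAAinv, Matrix.one_mulVec]
  have hq2 : dotProduct (θ - A⁻¹.mulVec muY)
      ((A⁻¹ * Sy * A⁻¹ᵀ)⁻¹.mulVec (θ - A⁻¹.mulVec muY))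
      = dotProduct (A.mulVec θ - muY) (Sy⁻¹.mulVec (A.mulVec θ - muY)) := by
    rw [hM2, ← quad_conj, hAv]
  -- determinants
  have hdet1 : (A * St * Aᵀ).det = A.det * St.det * A.det := by
    rw [Matrix.det_mul, Matrix.det_mul, Matrix.det_transpose]
  have hdet2 : (A⁻¹ * Sy * A⁻¹ᵀ).det = A.det⁻¹ * Sy.det * A.det⁻¹ := by
    rw [Matrix.det_mul, Matrix.det_mul, Matrix.det_transpose, Matrix.det_nonsing_inv,
      Ring.inverse_eq_inv']
  -- scalar computation
  simp only [mvGaussianPdf, hq1, hq2, hdet1, hdet2]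
  set c : ℝ := (2 * π) ^ p with hc
  have hcpos : 0 < c := by positivity
  have hstp : 0 < St.det := hSt.det_pos
  have hsyp : 0 < Sy.det := hSy.det_pos
  set d : ℝ := A.det
  have h1 : Real.sqrt (c * (d * St.det * d)) = |d| * Real.sqrt (c * St.det) := by
    rw [show c * (d * St.det * d) = d ^ 2 * (c * St.det) by ring,
      Real.sqrt_mul (sq_nonneg d), Real.sqrt_sq_eq_abs]
  have h2 : Real.sqrt (c * (d⁻¹ * Sy.det * d⁻¹)) = |d|⁻¹ * Real.sqrt (c * Sy.det) := by
    rw [show c * (d⁻¹ * Sy.det * d⁻¹) = (d⁻¹) ^ 2 * (c * Sy.det) by ring,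
      Real.sqrt_mul (sq_nonneg _), Real.sqrt_sq_eq_abs, abs_inv]
  have hs : (0:ℝ) < Real.sqrt (c * St.det) := Real.sqrt_pos.mpr (by positivity)
  have hy : (0:ℝ) < Real.sqrt (c * Sy.det) := Real.sqrt_pos.mpr (by positivity)
  have habs : |d| ≠ 0 := abs_ne_zero.mpr hd
  rw [h1, h2]
  have he1 : Real.exp (-(dotProduct (θ - muT) (St⁻¹.mulVec (θ - muT))) / 2) ≠ 0 :=
    Real.exp_ne_zero _
  field_simp
end
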